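/- With A, the filtration, the weight w and the ℤ_ℓ-action as in the context, for every d ∈ ℤ and every n ∈ ℕ the map φ ↦ ((x₁,…,x_n) ↦ φ(0,x₁,…,x_n)) is an isomorphism of O_E-modules from Fil^d_w C^n_pol(ℤ_ℓ, A) onto Fil^d_w Pol(ℤ_ℓ^n, A). -/

import Mathlib

open scoped BigOperators

set_option synthInstance.maxHeartbeats 1000000
set_option maxHeartbeats 2000000

/-- The ring of integers `O_E` of a finite extension `E` of `ℚ_ℓ`, realized as the
integral closure of `ℤ_ℓ` in `E`. -/
noncomputable def PaperOE (ℓ : ℕ) [Fact (Nat.Prime ℓ)] (E : Type*) [Field E] [Algebra ℤ_[ℓ] E] :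
    Subalgebra ℤ_[ℓ] E :=
  integralClosure ℤ_[ℓ] E

/-- The `I`-adic topology on an `O`-module `M`: the topology generated by the cosets
`a + I^k • M`. -/
def adicTopology {O : Type*} [CommRing O] (I : Ideal O) (M : Type*) [AddCommGroup M]
    [Module O M] : TopologicalSpace M :=
  TopologicalSpace.generateFrom
    {s | ∃ (a : M) (k : ℕ), s = {x | x - a ∈ (I ^ k) • (⊤ : Submodule O M)}}

/-- `f : ℤ_ℓ^n → A` lies in `Fil^j_w Pol(ℤ_ℓ^n, A)`: it is a polynomial function (with
respect to the extended binomial coefficients `Cb`) whose coefficient family `c` satisfies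
`c_m ∈ Fil^{j - w·|m|} A` for every multi-index `m`. -/
def IsFilPolZ {ℓ : ℕ} [Fact (Nat.Prime ℓ)] (Cb : ℤ_[ℓ] → ℕ → ℤ_[ℓ])
    {O : Type*} [CommRing O] [Algebra ℤ_[ℓ] O]
    {A : Type*} [AddCommGroup A] [Module O A]
    (Fil : ℤ → Submodule O A) (w : ℕ) (j : ℤ) {n : ℕ} (f : (Fin n → ℤ_[ℓ]) → A) : Prop :=
  ∃ c : (Fin n → ℕ) →₀ A,
    (∀ m : Fin n → ℕ, c m ∈ Fil (j - (w : ℤ) * ∑ t, (m t : ℤ))) ∧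
    ∀ x : Fin n → ℤ_[ℓ], f x = c.sum fun m v => algebraMap ℤ_[ℓ] O (∏ t, Cb (x t) (m t)) • v

/-- `φ : ℤ_ℓ^{n+1} → A` lies in `Fil^d_w C^n_pol(ℤ_ℓ, A)`: it is a polynomial function in
`Fil^d_w Pol(ℤ_ℓ^{n+1}, A)` which is equivariant: `φ(x₀+g,…,x_n+g) = γ^g·φ(x₀,…,x_n)`. -/
def IsFilCpolZ {ℓ : ℕ} [Fact (Nat.Prime ℓ)] (Cb : ℤ_[ℓ] → ℕ → ℤ_[ℓ])
    {O : Type*} [CommRing O] [Algebra ℤ_[ℓ] O]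
    {A : Type*} [AddCommGroup A] [Module O A]
    (Fil : ℤ → Submodule O A) (w : ℕ) (ρ : ℤ_[ℓ] → A → A) (d : ℤ) (n : ℕ)
    (φ : (Fin (n + 1) → ℤ_[ℓ]) → A) : Prop :=
  IsFilPolZ Cb Fil w d φ ∧
    ∀ (g : ℤ_[ℓ]) (x : Fin (n + 1) → ℤ_[ℓ]), φ (fun t => x t + g) = ρ g (φ x)

/-- The differential of homogeneous group cochains:
`dφ(x₀,…,x_{n+1}) = Σ_a (−1)^a φ(x₀,…,x̂_a,…,x_{n+1})`. -/
def gpDiff {G : Type*} {M : Type*} [AddCommGroup M] {n : ℕ}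
    (φ : (Fin (n + 1) → G) → M) : (Fin (n + 2) → G) → M :=
  fun x => ∑ a : Fin (n + 2), ((-1 : ℤ) ^ (a : ℕ)) • φ (fun t => x (a.succAbove t))

/-!
An equivariant cochain is determined by its restriction `f` to `x₀ = 0` through
`φ(x₀, x) = γ^{x₀} · f(x - x₀)`, and this formula always yields an equivariant function; the point
is that it is polynomial, in `Fil^d_w`, whenever `f` is. Write `f` in the binomial basis with
coefficient family `c`. The forward difference in `g` of `γ^g · f(x - g)` has the same shape, with
`c` replaced by `(γ ∘ shift - 1) c`, which lies `w` steps deeper in the filtration because `γ` acts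
trivially on the graded pieces. The filtration being bounded below, some iterated difference
vanishes, so Newton's formula expresses `γ^ν · f(x - ν)` for `ν ∈ ℕ` as a finite sum
`∑ₖ C(ν, k) • Δᵏ(0)`. This sum is polynomial in `(ν, x)` with the required filtration bounds, and
it extends from `ℕ` to `ℤ_ℓ` because both sides are `m_E`-adically continuous in `ν` and
`Fil^d A`, a finitely generated module over the noetherian local ring `O_E`, is `m_E`-adically
separated (Krull).
-/

open Finset Filter Topology

open scoped fwdDiff

theorem Ring.choose_sub_one {R : Type*} [CommRing R] [BinomialRing R] (r : R) (k : ℕ) :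
    Ring.choose (r - 1) k = ∑ i ∈ Iic k, (-1) ^ (k - i) * Ring.choose r i := by
  rw [sub_eq_add_neg, Ring.add_choose_eq k (Commute.all _ _),
    Nat.sum_antidiagonal_eq_sum_range_succ_mk, Nat.range_succ_eq_Iic]
  refine sum_congr rfl fun i _ => ?_
  rw [Ring.choose_neg', Ring.multichoose_one, Units.smul_def, Int.coe_negOnePow_natCast, zsmul_one]
  push_cast
  ring

theorem Submodule.apply_mem_smul_of_le_comap {R M : Type*} [CommRing R] [AddCommGroup M]
    [Module R M] {N : Submodule R M} {L : M →ₗ[R] M} (hL : N ≤ N.comap L) {J : Ideal R} {a : M}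
    (ha : a ∈ J • N) : L a ∈ J • N :=
  smul_mono_right J (map_le_iff_le_comap.2 hL) (by rw [← map_smul'']; exact mem_map_of_mem ha)

theorem fwdDiff_iter_eq_zero_of_le {M G : Type*} [AddCommMonoid M] [AddCommGroup G] {h : M}
    {U : M → G} {K k : ℕ} (hK : Δ_[h] ^[K] U = 0) (hk : K ≤ k) : Δ_[h] ^[k] U = 0 := by
  obtain ⟨j, rfl⟩ := Nat.exists_eq_add_of_le hk
  rw [add_comm, Function.iterate_add_apply, hK]
  exact Function.iterate_fixed (fwdDiff_const h (0 : G)) j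

namespace PadicInt

variable {ℓ : ℕ} [Fact ℓ.Prime]

theorem eq_choose_of_continuous {Cb : ℤ_[ℓ] → ℕ → ℤ_[ℓ]}
    (hCb_cont : ∀ k, Continuous fun x => Cb x k)
    (hCb_nat : ∀ n k : ℕ, Cb (n : ℤ_[ℓ]) k = ((n.choose k : ℕ) : ℤ_[ℓ])) :
    Cb = fun x k => Ring.choose x k := by
  funext x k
  exact congrFun (denseRange_natCast.equalizer (hCb_cont k) (mahler k).continuous
    (funext fun n => by simp [hCb_nat, mahler_natCast_eq])) x

theorem setOf_pow_dvd_sub_mem_nhds (x₀ : ℤ_[ℓ]) (s : ℕ) :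
    {x | (ℓ : ℤ_[ℓ]) ^ s ∣ x - x₀} ∈ 𝓝 x₀ := by
  have hℓ : (0 : ℝ) < ℓ := Nat.cast_pos.2 (Fact.out : ℓ.Prime).pos
  filter_upwards [Metric.closedBall_mem_nhds x₀ (zpow_pos hℓ (-(s : ℤ)))] with x hx
  rw [Metric.mem_closedBall, dist_eq_norm, norm_le_pow_iff_mem_span_pow] at hx
  exact Ideal.mem_span_singleton.1 hx

theorem eventually_pow_dvd_sub {X : Type*} [TopologicalSpace X] {e : X → ℤ_[ℓ]} {x₀ : X}
    (he : ContinuousAt e x₀) (s : ℕ) : ∀ᶠ x in 𝓝 x₀, (ℓ : ℤ_[ℓ]) ^ s ∣ e x - e x₀ :=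
  he (setOf_pow_dvd_sub_mem_nhds (e x₀) s)

end PadicInt

namespace PaperOE

variable (ℓ : ℕ) [Fact ℓ.Prime] (E : Type*) [Field E] [Algebra ℚ_[ℓ] E] [Algebra ℤ_[ℓ] E]
  [IsScalarTower ℤ_[ℓ] ℚ_[ℓ] E]

theorem isNoetherianRing [FiniteDimensional ℚ_[ℓ] E] : IsNoetherianRing (PaperOE ℓ E) := by
  have : CharZero E := charZero_of_injective_algebraMap (algebraMap ℚ_[ℓ] E).injective
  have : IsIntegralClosure (PaperOE ℓ E) ℤ_[ℓ] E := integralClosure.isIntegralClosure ℤ_[ℓ] E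
  exact IsIntegralClosure.isNoetherianRing ℤ_[ℓ] ℚ_[ℓ] E (PaperOE ℓ E)

theorem algebraMap_prime_mem_maximalIdeal [IsLocalRing (PaperOE ℓ E)] :
    algebraMap ℤ_[ℓ] (PaperOE ℓ E) ℓ ∈ IsLocalRing.maximalIdeal (PaperOE ℓ E) := by
  have : Algebra.IsIntegral ℤ_[ℓ] (PaperOE ℓ E) := integralClosure.AlgebraIsIntegral
  have : FaithfulSMul ℤ_[ℓ] E := .trans ℤ_[ℓ] ℚ_[ℓ] E
  have : FaithfulSMul ℤ_[ℓ] (PaperOE ℓ E) := .tower_bot ℤ_[ℓ] (PaperOE ℓ E) E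
  exact (map_mem_nonunits_iff (algebraMap ℤ_[ℓ] (PaperOE ℓ E)) _).2 PadicInt.p_nonunit

end PaperOE

section AdicApproximation

variable {ℓ : ℕ} [Fact ℓ.Prime] {O : Type*} [CommRing O] [Algebra ℤ_[ℓ] O]
  {M : Type*} [AddCommGroup M] [Module O M] {I : Ideal O}

theorem algebraMap_smul_mem_pow_smul (hℓ : algebraMap ℤ_[ℓ] O ℓ ∈ I) {s : ℕ} {z : ℤ_[ℓ]}
    (hz : (ℓ : ℤ_[ℓ]) ^ s ∣ z) {N : Submodule O M} {a : M} (ha : a ∈ N) :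
    algebraMap ℤ_[ℓ] O z • a ∈ I ^ s • N := by
  obtain ⟨z, rfl⟩ := hz
  rw [map_mul, map_pow, mul_smul]
  exact Submodule.smul_mem_smul (Ideal.pow_mem_pow hℓ s) (N.smul_mem _ ha)

theorem eventually_apply_sub_mem_pow_smul {X : Type*} [TopologicalSpace X] {N : Submodule O M}
    {ρ : X → M → M} (hρN : ∀ x a, a ∈ N → ρ x a ∈ N)
    (hcont : letI : TopologicalSpace N := adicTopology I N
      Continuous fun p : X × N => (⟨ρ p.1 p.2, hρN p.1 p.2 p.2.2⟩ : N))
    (a : M) (ha : a ∈ N) (x₀ : X) (s : ℕ) : ∀ᶠ x in 𝓝 x₀, ρ x a - ρ x₀ a ∈ I ^ s • N := by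
  let _ : TopologicalSpace N := adicTopology I N
  have hf : Continuous fun x => (⟨ρ x a, hρN x a ha⟩ : N) :=
    hcont.comp (Continuous.prodMk_left (⟨a, ha⟩ : N))
  have hopen : IsOpen {y : N | y - ⟨ρ x₀ a, hρN x₀ a ha⟩ ∈ I ^ s • (⊤ : Submodule O N)} :=
    TopologicalSpace.isOpen_generateFrom_of_mem ⟨_, s, rfl⟩
  filter_upwards [hf.continuousAt.preimage_mem_nhds (hopen.mem_nhds (by simp))] with x hx
  exact (Submodule.mem_smul_top_iff (I ^ s) N _).1 hx

theorem sum_choose_smul_fwdDiff_iter_natCast {U : ℤ_[ℓ] → M} {K : ℕ} (hK : Δ_[1] ^[K] U = 0)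
    (ν : ℕ) :
    ∑ k ∈ range K, algebraMap ℤ_[ℓ] O (Ring.choose (ν : ℤ_[ℓ]) k) • Δ_[1] ^[k] U 0 = U ν := by
  have hnewton := shift_eq_sum_fwdDiff_iter (1 : ℤ_[ℓ]) U ν 0
  rw [zero_add, nsmul_one] at hnewton
  rw [hnewton]
  simp only [Ring.choose_natCast, map_natCast, Nat.cast_smul_eq_nsmul]
  have hvanish : ∀ k ∉ range K ∩ range (ν + 1), ν.choose k • Δ_[1] ^[k] U 0 = 0 := by
    intro k hk
    rcases le_or_gt K k with hKk | hkK
    · simp [fwdDiff_iter_eq_zero_of_le hK hKk]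
    · rw [Nat.choose_eq_zero_of_lt (by simp_all), zero_smul]
  rw [← sum_subset inter_subset_left fun k _ => hvanish k,
    sum_subset inter_subset_right fun k _ => hvanish k]

theorem sum_choose_smul_fwdDiff_iter (hℓ : algebraMap ℤ_[ℓ] O ℓ ∈ I) (N : Submodule O M)
    [IsHausdorff I N] {U : ℤ_[ℓ] → M} (hUN : ∀ g, U g ∈ N)
    (hU : ∀ g₀ s, ∀ᶠ g in 𝓝 g₀, U g - U g₀ ∈ I ^ s • N) {K : ℕ} (hK : Δ_[1] ^[K] U = 0)
    (g : ℤ_[ℓ]) : ∑ k ∈ range K, algebraMap ℤ_[ℓ] O (Ring.choose g k) • Δ_[1] ^[k] U 0 = U g := by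
  have hΔN : ∀ k, Δ_[1] ^[k] U 0 ∈ N := fun k => by
    rw [fwdDiff_iter_eq_sum_shift]
    exact sum_mem fun i _ => N.smul_of_tower_mem _ (hUN _)
  set W := U g - ∑ k ∈ range K, algebraMap ℤ_[ℓ] O (Ring.choose g k) • Δ_[1] ^[k] U 0
  have hWN : W ∈ N := sub_mem (hUN g) (sum_mem fun k _ => N.smul_mem _ (hΔN k))
  suffices hW : ∀ s, W ∈ I ^ s • N by
    have := IsHausdorff.haus' (I := I) (⟨W, hWN⟩ : N) fun s => by
      rw [SModEq.zero, Submodule.mem_smul_top_iff]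
      exact hW s
    exact (sub_eq_zero.1 (congrArg Subtype.val this)).symm
  intro s
  -- compare with a natural number `ν` close to `g`, where Newton's formula gives the expansion
  have hchoose : ∀ k ∈ range K, ∀ᶠ g' in 𝓝 g,
      (ℓ : ℤ_[ℓ]) ^ s ∣ Ring.choose g' k - Ring.choose g k :=
    fun k _ => PadicInt.eventually_pow_dvd_sub (mahler k).continuous.continuousAt s
  obtain ⟨ν, hνU, hνchoose⟩ := PadicInt.denseRange_natCast.mem_nhds
    ((hU g s).and ((eventually_all_finset _).2 hchoose))
  have hWν : W = -(U ν - U g) + ∑ k ∈ range K,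
      algebraMap ℤ_[ℓ] O (Ring.choose (ν : ℤ_[ℓ]) k - Ring.choose g k) • Δ_[1] ^[k] U 0 := by
    simp only [map_sub, sub_smul, sum_sub_distrib, sum_choose_smul_fwdDiff_iter_natCast hK, W]
    abel
  rw [hWν]
  exact add_mem (neg_mem hνU) (sum_mem fun k hk =>
    algebraMap_smul_mem_pow_smul hℓ (hνchoose k hk) (hΔN k))

end AdicApproximation

section CoefficientFamilies

variable {ℓ : ℕ} [Fact ℓ.Prime] (O : Type*) [CommRing O] [Algebra ℤ_[ℓ] O]
  {A : Type*} [AddCommGroup A] [Module O A] {n : ℕ}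

noncomputable def binomialEval (x : Fin n → ℤ_[ℓ]) : ((Fin n → ℕ) →₀ A) →ₗ[O] A :=
  Finsupp.lsum O fun m => algebraMap ℤ_[ℓ] O (∏ t, Ring.choose (x t) (m t)) • LinearMap.id

noncomputable def shiftCoeffs : ((Fin n → ℕ) →₀ A) →ₗ[O] ((Fin n → ℕ) →₀ A) :=
  Finsupp.lsum O fun m => ∑ ι ∈ Iic m, (∏ t, (-1 : O) ^ (m t - ι t)) • Finsupp.lsingle ι

variable {O}

/-- `Δ_g (γ^g · f(x - g)) = γ^g · f'(x - g)` when `f` and `f'` have the coefficient families `c`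
and `stepCoeffs γ c` (`fwdDiff_iter_orbit`). -/
noncomputable def stepCoeffs (γ : A →ₗ[O] A) : ((Fin n → ℕ) →₀ A) →ₗ[O] ((Fin n → ℕ) →₀ A) :=
  Finsupp.mapRange.linearMap γ ∘ₗ shiftCoeffs O - LinearMap.id

def filCoeffs (Fil : ℤ → Submodule O A) (w : ℕ) (j : ℤ) (n : ℕ) :
    Submodule O ((Fin n → ℕ) →₀ A) where
  carrier := {c | ∀ m : Fin n → ℕ, c m ∈ Fil (j - w * ∑ t, (m t : ℤ))}
  add_mem' hc hd m := add_mem (hc m) (hd m)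
  zero_mem' _ := zero_mem _
  smul_mem' r _ hc m := Submodule.smul_mem _ r (hc m)

theorem isFilPolZ_iff {Fil : ℤ → Submodule O A} {w : ℕ} {j : ℤ} {f : (Fin n → ℤ_[ℓ]) → A} :
    IsFilPolZ (fun x k => Ring.choose x k) Fil w j f ↔
      ∃ c ∈ filCoeffs Fil w j n, ∀ x, f x = binomialEval O x c :=
  Iff.rfl

theorem binomialEval_apply (x : Fin n → ℤ_[ℓ]) (c : (Fin n → ℕ) →₀ A) :
    binomialEval O x c = c.sum fun m v => algebraMap ℤ_[ℓ] O (∏ t, Ring.choose (x t) (m t)) • v :=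
  rfl

theorem binomialEval_single (x : Fin n → ℤ_[ℓ]) (m : Fin n → ℕ) (v : A) :
    binomialEval O x (Finsupp.single m v) =
      algebraMap ℤ_[ℓ] O (∏ t, Ring.choose (x t) (m t)) • v := by
  simp [binomialEval]

theorem binomialEval_mapRange (γ : A →ₗ[O] A) (x : Fin n → ℤ_[ℓ]) (c : (Fin n → ℕ) →₀ A) :
    binomialEval O x (Finsupp.mapRange.linearMap γ c) = γ (binomialEval O x c) := by
  rw [← LinearMap.comp_apply, ← LinearMap.comp_apply (f := γ)]
  congr 1
  refine Finsupp.lhom_ext fun m v => ?_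
  simp [binomialEval_single]

theorem shiftCoeffs_single (m : Fin n → ℕ) (v : A) :
    shiftCoeffs O (Finsupp.single m v) =
      ∑ ι ∈ Iic m, Finsupp.single ι ((∏ t, (-1 : O) ^ (m t - ι t)) • v) := by
  simp [shiftCoeffs]

theorem binomialEval_shiftCoeffs (x : Fin n → ℤ_[ℓ]) (c : (Fin n → ℕ) →₀ A) :
    binomialEval O x (shiftCoeffs O c) = binomialEval O (fun t => x t - 1) c := by
  rw [← LinearMap.comp_apply]
  congr 1
  refine Finsupp.lhom_ext fun m v => ?_
  simp only [LinearMap.comp_apply, shiftCoeffs_single, map_sum, binomialEval_single, smul_smul,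
    Ring.choose_sub_one, prod_univ_sum, map_sum, map_prod, map_mul, map_pow, map_neg, map_one,
    ← Finset.sum_smul]
  congr 1
  refine sum_congr rfl fun ι _ => ?_
  rw [← prod_mul_distrib]
  exact prod_congr rfl fun t _ => mul_comm _ _

theorem stepCoeffs_single (γ : A →ₗ[O] A) (m : Fin n → ℕ) (v : A) :
    stepCoeffs γ (Finsupp.single m v) = Finsupp.single m (γ v - v) +
      ∑ ι ∈ Iio m, Finsupp.single ι ((∏ t, (-1 : O) ^ (m t - ι t)) • γ v) := by
  rw [stepCoeffs, LinearMap.sub_apply, LinearMap.comp_apply, shiftCoeffs_single, Iic_eq_cons_Iio,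
    sum_cons, map_add, map_sum]
  simp only [Finsupp.mapRange.linearMap_apply, Finsupp.mapRange_single, map_smul, Nat.sub_self,
    pow_zero, prod_const_one, one_smul, LinearMap.id_apply, Finsupp.single_sub]
  abel

theorem binomialEval_mapDomain_cons (x : Fin (n + 1) → ℤ_[ℓ]) (k : ℕ) (c : (Fin n → ℕ) →₀ A) :
    binomialEval O x (c.mapDomain (Fin.cons (α := fun _ => ℕ) k)) =
      algebraMap ℤ_[ℓ] O (Ring.choose (x 0) k) • binomialEval O (Fin.tail x) c := by
  rw [← Finsupp.lmapDomain_apply A O, ← LinearMap.comp_apply, ← LinearMap.smul_apply]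
  congr 1
  refine Finsupp.lhom_ext fun m v => ?_
  simp [binomialEval_single, Fin.prod_univ_succ, Fin.tail, mul_smul]

theorem binomialEval_cons_zero (x : Fin n → ℤ_[ℓ]) (c : (Fin (n + 1) → ℕ) →₀ A) :
    binomialEval O (Fin.cons 0 x) c = binomialEval O x
      (c.comapDomain (Fin.cons (α := fun _ => ℕ) 0) (Fin.cons_right_injective 0).injOn) := by
  change _ = binomialEval O x (Finsupp.lcomapDomain (R := O) _ (Fin.cons_right_injective 0) c)
  rw [← LinearMap.comp_apply]
  congr 1
  refine Finsupp.lhom_ext fun m v => ?_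
  rw [LinearMap.comp_apply, binomialEval_single, Fin.prod_univ_succ, Fin.cons_zero]
  by_cases hm : m 0 = 0
  · rw [← Fin.cons_self_tail m, hm, Finsupp.lcomapDomain_apply, Finsupp.comapDomain_single]
    simp [binomialEval_single]
  · have hzero : Finsupp.lcomapDomain (R := O) _ (Fin.cons_right_injective 0)
        (Finsupp.single m v) = 0 := by
      ext ι
      simp only [Finsupp.lcomapDomain_apply, Finsupp.comapDomain_apply, Finsupp.single_apply]
      rw [if_neg fun h => hm (by rw [h, Fin.cons_zero]), Finsupp.coe_zero, Pi.zero_apply]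
    rw [hzero, map_zero, Ring.choose_zero_pos ℤ_[ℓ] (Nat.pos_of_ne_zero hm), zero_mul, map_zero,
      zero_smul]

theorem eventually_binomialEval_sub_mem {I : Ideal O} (hℓ : algebraMap ℤ_[ℓ] O ℓ ∈ I)
    {X : Type*} [TopologicalSpace X] {y : X → Fin n → ℤ_[ℓ]} (hy : Continuous y)
    {N : Submodule O A} {c : (Fin n → ℕ) →₀ A} (hc : ∀ m, c m ∈ N) (x₀ : X) (s : ℕ) :
    ∀ᶠ x in 𝓝 x₀, binomialEval O (y x) c - binomialEval O (y x₀) c ∈ I ^ s • N := by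
  have hcoeff : ∀ m ∈ c.support, ∀ᶠ x in 𝓝 x₀, (ℓ : ℤ_[ℓ]) ^ s ∣
      ∏ t, Ring.choose (y x t) (m t) - ∏ t, Ring.choose (y x₀ t) (m t) := fun m _ =>
    PadicInt.eventually_pow_dvd_sub (continuous_finsetProd _ fun t _ =>
      (mahler (m t)).continuous.comp ((continuous_apply t).comp hy)).continuousAt s
  filter_upwards [(eventually_all_finset _).2 hcoeff] with x hx
  rw [binomialEval_apply, binomialEval_apply, ← Finsupp.sum_sub]
  exact sum_mem fun m hm => by
    simpa only [← sub_smul, ← map_sub] using algebraMap_smul_mem_pow_smul hℓ (hx m hm) (hc m)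

end CoefficientFamilies

section Filtration

variable {ℓ : ℕ} [Fact ℓ.Prime] {O : Type*} [CommRing O] [Algebra ℤ_[ℓ] O]
  {A : Type*} [AddCommGroup A] [Module O A] {Fil : ℤ → Submodule O A} {w : ℕ} {n : ℕ}

theorem coeff_mem_of_mem_filCoeffs (hmono : Monotone Fil) {j : ℤ} {c : (Fin n → ℕ) →₀ A}
    (hc : c ∈ filCoeffs Fil w j n) (m : Fin n → ℕ) : c m ∈ Fil j :=
  hmono (sub_le_self j (mul_nonneg (Int.natCast_nonneg w)
    (sum_nonneg fun _ _ => Int.natCast_nonneg _))) (hc m)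

theorem single_mem_filCoeffs {j : ℤ} {m : Fin n → ℕ} {v : A}
    (hv : v ∈ Fil (j - w * ∑ t, (m t : ℤ))) : Finsupp.single m v ∈ filCoeffs Fil w j n := by
  intro ι
  rw [Finsupp.single_apply]
  split_ifs with h
  · exact h ▸ hv
  · exact zero_mem _

theorem filCoeffs_le_comap_of_single {n' : ℕ} {j j' : ℤ}
    (T : ((Fin n → ℕ) →₀ A) →ₗ[O] ((Fin n' → ℕ) →₀ A))
    (hT : ∀ m v, v ∈ Fil (j - w * ∑ t, (m t : ℤ)) →
      T (Finsupp.single m v) ∈ filCoeffs Fil w j' n') :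
    filCoeffs Fil w j n ≤ (filCoeffs Fil w j' n').comap T := by
  intro c hc
  rw [Submodule.mem_comap, ← c.sum_single, map_finsuppSum]
  exact sum_mem fun m _ => hT m (c m) (hc m)

theorem filCoeffs_eq_bot (hmono : Monotone Fil) {j j₀ : ℤ} (hj₀ : Fil j₀ = ⊥) (hj : j ≤ j₀) :
    filCoeffs Fil w j n = ⊥ := by
  refine eq_bot_iff.2 fun c hc => (Submodule.mem_bot O).2 (Finsupp.ext fun m => ?_)
  simpa [hj₀] using hmono hj (coeff_mem_of_mem_filCoeffs hmono hc m)

theorem binomialEval_mem (hmono : Monotone Fil) {j : ℤ} {c : (Fin n → ℕ) →₀ A}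
    (hc : c ∈ filCoeffs Fil w j n) (x : Fin n → ℤ_[ℓ]) : binomialEval O x c ∈ Fil j := by
  rw [binomialEval_apply]
  exact sum_mem fun m _ => Submodule.smul_mem _ _ (coeff_mem_of_mem_filCoeffs hmono hc m)

theorem stepCoeffs_mem (hmono : Monotone Fil) {γ : A →ₗ[O] A}
    (hγ_fil : ∀ j a, a ∈ Fil j → γ a ∈ Fil j) (hγ_triv : ∀ j a, a ∈ Fil j → γ a - a ∈ Fil (j - w))
    {j : ℤ} {c : (Fin n → ℕ) →₀ A} (hc : c ∈ filCoeffs Fil w j n) :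
    stepCoeffs γ c ∈ filCoeffs Fil w (j - w) n := by
  refine filCoeffs_le_comap_of_single (stepCoeffs γ) (fun m v hv => ?_) hc
  rw [stepCoeffs_single]
  refine add_mem (single_mem_filCoeffs ?_) (sum_mem fun ι hι => single_mem_filCoeffs ?_)
  · convert hγ_triv _ v hv using 2
    ring
  · refine Submodule.smul_mem _ _ (hγ_fil _ _ (hmono ?_ hv))
    obtain ⟨hle, t, ht⟩ := Pi.lt_def.1 (mem_Iio.1 hι)
    have hdeg : ∑ t, (ι t : ℤ) < ∑ t, (m t : ℤ) :=
      sum_lt_sum (fun t _ => Int.ofNat_le.2 (hle t)) ⟨t, mem_univ t, Int.ofNat_lt.2 ht⟩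
    have := mul_le_mul_of_nonneg_left (Int.add_one_le_of_lt hdeg) (Int.natCast_nonneg w)
    linarith

theorem stepCoeffs_pow_mem (hmono : Monotone Fil) {γ : A →ₗ[O] A}
    (hγ_fil : ∀ j a, a ∈ Fil j → γ a ∈ Fil j) (hγ_triv : ∀ j a, a ∈ Fil j → γ a - a ∈ Fil (j - w))
    {j : ℤ} {c : (Fin n → ℕ) →₀ A} (hc : c ∈ filCoeffs Fil w j n) (k : ℕ) :
    (stepCoeffs γ ^ k) c ∈ filCoeffs Fil w (j - w * k) n := by
  induction k with
  | zero => simpa using hc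
  | succ k ih =>
    rw [pow_succ', Module.End.mul_apply]
    convert stepCoeffs_mem hmono hγ_fil hγ_triv ih using 2
    push_cast
    ring

theorem exists_stepCoeffs_pow_eq_zero (hmono : Monotone Fil) {j₀ : ℤ} (hj₀ : Fil j₀ = ⊥)
    (hw : 0 < w) {γ : A →ₗ[O] A} (hγ_fil : ∀ j a, a ∈ Fil j → γ a ∈ Fil j)
    (hγ_triv : ∀ j a, a ∈ Fil j → γ a - a ∈ Fil (j - w)) {j : ℤ} {c : (Fin n → ℕ) →₀ A}
    (hc : c ∈ filCoeffs Fil w j n) : ∃ K : ℕ, (stepCoeffs γ ^ K) c = 0 := by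
  refine ⟨(j - j₀).toNat, ?_⟩
  have hK : j - w * (j - j₀).toNat ≤ j₀ := by
    have := Int.self_le_toNat (j - j₀)
    nlinarith
  have := stepCoeffs_pow_mem hmono hγ_fil hγ_triv hc (j - j₀).toNat
  rwa [filCoeffs_eq_bot hmono hj₀ hK, Submodule.mem_bot] at this

theorem mapDomain_cons_mem_filCoeffs {j : ℤ} {k : ℕ} {c : (Fin n → ℕ) →₀ A}
    (hc : c ∈ filCoeffs Fil w (j - w * k) n) :
    c.mapDomain (Fin.cons (α := fun _ => ℕ) k) ∈ filCoeffs Fil w j (n + 1) := by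
  refine filCoeffs_le_comap_of_single (Finsupp.lmapDomain A O (Fin.cons (α := fun _ => ℕ) k))
    (fun m v hv => ?_) hc
  rw [Finsupp.lmapDomain_apply, Finsupp.mapDomain_single]
  refine single_mem_filCoeffs ?_
  convert hv using 2
  simp only [Fin.sum_univ_succ, Fin.cons_zero, Fin.cons_succ]
  ring

theorem comapDomain_cons_mem_filCoeffs {j : ℤ} {c : (Fin (n + 1) → ℕ) →₀ A}
    (hc : c ∈ filCoeffs Fil w j (n + 1)) :
    c.comapDomain (Fin.cons (α := fun _ => ℕ) 0) (Fin.cons_right_injective 0).injOn ∈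
      filCoeffs Fil w j n := by
  intro m
  simpa [Fin.sum_univ_succ] using hc (Fin.cons 0 m)

theorem IsFilPolZ.comp_cons_zero {j : ℤ} {φ : (Fin (n + 1) → ℤ_[ℓ]) → A}
    (hφ : IsFilPolZ (fun x k => Ring.choose x k) Fil w j φ) :
    IsFilPolZ (fun x k => Ring.choose x k) Fil w j fun x => φ (Fin.cons 0 x) := by
  obtain ⟨c, hc, hφc⟩ := isFilPolZ_iff.1 hφ
  exact isFilPolZ_iff.2 ⟨_, comapDomain_cons_mem_filCoeffs hc, fun x => by
    rw [hφc, binomialEval_cons_zero]⟩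

end Filtration

section EquivariantExtension

variable {G M : Type*} [AddCommGroup G] {n : ℕ} {ρ : G → M → M}

def equivariantExtension (ρ : G → M → M) (f : (Fin n → G) → M) : (Fin (n + 1) → G) → M :=
  fun x => ρ (x 0) (f fun t => x t.succ - x 0)

theorem equivariantExtension_add_const (hρ_add : ∀ g h a, ρ (g + h) a = ρ g (ρ h a))
    (f : (Fin n → G) → M) (g : G) (x : Fin (n + 1) → G) :
    equivariantExtension ρ f (fun t => x t + g) = ρ g (equivariantExtension ρ f x) := by
  simp only [equivariantExtension, add_sub_add_right_eq_sub]
  rw [add_comm, hρ_add]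

theorem equivariantExtension_cons_zero (hρ_zero : ∀ a, ρ 0 a = a) (f : (Fin n → G) → M)
    (x : Fin n → G) : equivariantExtension ρ f (Fin.cons 0 x) = f x := by
  simp [equivariantExtension, hρ_zero]

theorem eq_equivariantExtension {φ : (Fin (n + 1) → G) → M}
    (hφ : ∀ g x, φ (fun t => x t + g) = ρ g (φ x)) :
    φ = equivariantExtension ρ fun x => φ (Fin.cons 0 x) := by
  funext x
  rw [equivariantExtension, ← hφ]
  congr 1
  funext t
  refine Fin.cases ?_ (fun t => ?_) t <;> simp

end EquivariantExtension

section Orbit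

variable {ℓ : ℕ} [Fact ℓ.Prime] {O : Type*} [CommRing O] [Algebra ℤ_[ℓ] O]
  {A : Type*} [AddCommGroup A] [Module O A] {Fil : ℤ → Submodule O A} {w : ℕ} {n : ℕ}
  {ρ : ℤ_[ℓ] → A →ₗ[O] A} {I : Ideal O}

theorem fwdDiff_iter_orbit (hρ_add : ∀ g h, ρ (g + h) = ρ g ∘ₗ ρ h) (k : ℕ)
    (c : (Fin n → ℕ) →₀ A) (x : Fin n → ℤ_[ℓ]) :
    Δ_[1] ^[k] (fun g => ρ g (binomialEval O (fun t => x t - g) c)) =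
      fun g => ρ g (binomialEval O (fun t => x t - g) ((stepCoeffs (ρ 1) ^ k) c)) := by
  induction k generalizing c with
  | zero => rfl
  | succ k ih =>
    rw [Function.iterate_succ_apply, pow_succ, Module.End.mul_apply, ← ih]
    congr 1
    funext g
    simp only [fwdDiff, stepCoeffs, hρ_add, LinearMap.comp_apply, LinearMap.sub_apply, map_sub,
      binomialEval_mapRange, binomialEval_shiftCoeffs, LinearMap.id_apply, sub_add_eq_sub_sub]

theorem apply_binomialEval_sub_eq_sum (hmono : Monotone Fil) (hρ_zero : ρ 0 = LinearMap.id)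
    (hρ_add : ∀ g h, ρ (g + h) = ρ g ∘ₗ ρ h) (hρ_fil : ∀ g j a, a ∈ Fil j → ρ g a ∈ Fil j)
    (hℓ : algebraMap ℤ_[ℓ] O ℓ ∈ I) {j : ℤ} [IsHausdorff I (Fil j)]
    (hρ_cont : ∀ a ∈ Fil j, ∀ g₀ s, ∀ᶠ g in 𝓝 g₀, ρ g a - ρ g₀ a ∈ I ^ s • Fil j)
    {c : (Fin n → ℕ) →₀ A} (hc : c ∈ filCoeffs Fil w j n) {K : ℕ}
    (hK : (stepCoeffs (ρ 1) ^ K) c = 0) (x : Fin n → ℤ_[ℓ]) (g : ℤ_[ℓ]) :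
    ρ g (binomialEval O (fun t => x t - g) c) = ∑ k ∈ range K,
      algebraMap ℤ_[ℓ] O (Ring.choose g k) • binomialEval O x ((stepCoeffs (ρ 1) ^ k) c) := by
  have hval : ∀ g, binomialEval O (fun t => x t - g) c ∈ Fil j :=
    fun g => binomialEval_mem hmono hc _
  have hcont : ∀ g₀ s, ∀ᶠ g in 𝓝 g₀, ρ g (binomialEval O (fun t => x t - g) c) -
      ρ g₀ (binomialEval O (fun t => x t - g₀) c) ∈ I ^ s • Fil j := fun g₀ s => by
    have hy : Continuous fun g : ℤ_[ℓ] => fun t => x t - g := by fun_prop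
    filter_upwards [eventually_binomialEval_sub_mem hℓ hy
        (coeff_mem_of_mem_filCoeffs hmono hc) g₀ s, hρ_cont _ (hval g₀) g₀ s] with g hsub hρ
    rw [← sub_add_sub_cancel _ (ρ g (binomialEval O (fun t => x t - g₀) c)), ← map_sub]
    exact add_mem (Submodule.apply_mem_smul_of_le_comap (fun a => hρ_fil g j a) hsub) hρ
  have hΔK : Δ_[1] ^[K] (fun g => ρ g (binomialEval O (fun t => x t - g) c)) = 0 := by
    ext g
    simp [fwdDiff_iter_orbit hρ_add, hK]
  rw [← sum_choose_smul_fwdDiff_iter hℓ (Fil j) (fun g => hρ_fil g j _ (hval g)) hcont hΔK g]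
  simp [fwdDiff_iter_orbit hρ_add, hρ_zero]

theorem isFilPolZ_equivariantExtension (hmono : Monotone Fil) (hbot : ∃ j₀, Fil j₀ = ⊥)
    (hw : 0 < w) (hρ_zero : ρ 0 = LinearMap.id) (hρ_add : ∀ g h, ρ (g + h) = ρ g ∘ₗ ρ h)
    (hρ_fil : ∀ g j a, a ∈ Fil j → ρ g a ∈ Fil j)
    (hρ_triv : ∀ j a, a ∈ Fil j → ρ 1 a - a ∈ Fil (j - w))
    (hℓ : algebraMap ℤ_[ℓ] O ℓ ∈ I) {d : ℤ} [IsHausdorff I (Fil d)]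
    (hρ_cont : ∀ a ∈ Fil d, ∀ g₀ s, ∀ᶠ g in 𝓝 g₀, ρ g a - ρ g₀ a ∈ I ^ s • Fil d)
    {f : (Fin n → ℤ_[ℓ]) → A} (hf : IsFilPolZ (fun x k => Ring.choose x k) Fil w d f) :
    IsFilPolZ (fun x k => Ring.choose x k) Fil w d (equivariantExtension (fun g => ρ g) f) := by
  obtain ⟨c, hc, hfc⟩ := isFilPolZ_iff.1 hf
  obtain ⟨j₀, hj₀⟩ := hbot
  obtain ⟨K, hK⟩ := exists_stepCoeffs_pow_eq_zero hmono hj₀ hw (hρ_fil 1) hρ_triv hc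
  refine isFilPolZ_iff.2 ⟨∑ k ∈ range K, ((stepCoeffs (ρ 1) ^ k) c).mapDomain
      (Fin.cons (α := fun _ => ℕ) k), sum_mem fun k _ => mapDomain_cons_mem_filCoeffs
      (stepCoeffs_pow_mem hmono (hρ_fil 1) hρ_triv hc k), fun x => ?_⟩
  simp only [equivariantExtension, hfc, map_sum, binomialEval_mapDomain_cons]
  exact apply_binomialEval_sub_eq_sum hmono hρ_zero hρ_add hρ_fil hℓ hρ_cont hc hK
    (Fin.tail x) (x 0)

end Orbit

theorem filCpolZ_equiv_filPolZ
    (ℓ : ℕ) [Fact (Nat.Prime ℓ)]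
    (E : Type*) [Field E] [Algebra ℚ_[ℓ] E] [FiniteDimensional ℚ_[ℓ] E]
    [Algebra ℤ_[ℓ] E] [IsScalarTower ℤ_[ℓ] ℚ_[ℓ] E] [IsLocalRing ↥(PaperOE ℓ E)]
    (Cb : ℤ_[ℓ] → ℕ → ℤ_[ℓ])
    (hCb_cont : ∀ k, Continuous fun x => Cb x k)
    (hCb_nat : ∀ n k : ℕ, Cb (n : ℤ_[ℓ]) k = ((n.choose k : ℕ) : ℤ_[ℓ]))
    (A : Type*) [AddCommGroup A] [Module ↥(PaperOE ℓ E) A]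
    (Fil : ℤ → Submodule ↥(PaperOE ℓ E) A) (hmono : Monotone Fil)
    (hbot : ∃ j₀ : ℤ, Fil j₀ = ⊥)
    (w : ℕ) (hw : 0 < w)
    (ρ : ℤ_[ℓ] → A → A)
    (hρ_zero : ∀ a, ρ 0 a = a)
    (hρ_add : ∀ g h a, ρ (g + h) a = ρ g (ρ h a))
    (hρ_lin : ∀ g, IsLinearMap ↥(PaperOE ℓ E) (ρ g))
    (hρ_fil : ∀ (g : ℤ_[ℓ]) (j : ℤ) (a : A), a ∈ Fil j → ρ g a ∈ Fil j)
    (hfg : ∀ j, (Fil j).FG)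
    (hcont : ∀ j : ℤ,
      letI : TopologicalSpace ↥(Fil j) :=
        adicTopology (IsLocalRing.maximalIdeal ↥(PaperOE ℓ E)) ↥(Fil j)
      Continuous fun p : ℤ_[ℓ] × ↥(Fil j) =>
        (⟨ρ p.1 ↑p.2, hρ_fil p.1 j ↑p.2 p.2.2⟩ : ↥(Fil j)))
    (htriv : ∀ (j : ℤ) (g : ℤ_[ℓ]) (a : A), a ∈ Fil j → ρ g a - a ∈ Fil (j - w))
    (d : ℤ) (n : ℕ) :
    (∀ φ : (Fin (n + 1) → ℤ_[ℓ]) → A, IsFilCpolZ Cb Fil w ρ d n φ →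
      IsFilPolZ Cb Fil w d fun x : Fin n → ℤ_[ℓ] => φ (Fin.cons 0 x)) ∧
    (∀ φ φ' : (Fin (n + 1) → ℤ_[ℓ]) → A, IsFilCpolZ Cb Fil w ρ d n φ →
      IsFilCpolZ Cb Fil w ρ d n φ' →
      (fun x : Fin n → ℤ_[ℓ] => φ (Fin.cons 0 x)) =
        (fun x : Fin n → ℤ_[ℓ] => φ' (Fin.cons 0 x)) → φ = φ') ∧
    (∀ f : (Fin n → ℤ_[ℓ]) → A, IsFilPolZ Cb Fil w d f →
      ∃ φ : (Fin (n + 1) → ℤ_[ℓ]) → A, IsFilCpolZ Cb Fil w ρ d n φ ∧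
        ∀ x : Fin n → ℤ_[ℓ], φ (Fin.cons 0 x) = f x) := by
  obtain rfl := PadicInt.eq_choose_of_continuous hCb_cont hCb_nat
  have := PaperOE.isNoetherianRing ℓ E
  have : ∀ j, Module.Finite (PaperOE ℓ E) (Fil j) := fun j => Module.Finite.iff_fg.2 (hfg j)
  let ρL : ℤ_[ℓ] → A →ₗ[PaperOE ℓ E] A := fun g => IsLinearMap.mk' (ρ g) (hρ_lin g)
  refine ⟨fun φ hφ => hφ.1.comp_cons_zero, fun φ φ' hφ hφ' hres => ?_, fun f hf => ?_⟩
  · rw [eq_equivariantExtension hφ.2, eq_equivariantExtension hφ'.2, hres]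
  · refine ⟨equivariantExtension ρ f, ⟨?_, equivariantExtension_add_const hρ_add f⟩,
      equivariantExtension_cons_zero hρ_zero f⟩
    exact isFilPolZ_equivariantExtension (ρ := ρL) hmono hbot hw (LinearMap.ext hρ_zero)
      (fun g h => LinearMap.ext (hρ_add g h)) hρ_fil (fun j a => htriv j 1 a)
      (PaperOE.algebraMap_prime_mem_maximalIdeal ℓ E)
      (eventually_apply_sub_mem_pow_smul (hρ_fil · d) (hcont d)) hf
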